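/- Let B be any function from degree distributions to the integers with B(0) = 0, and let d be a degree distribution such that the marked vertex identity 4·(f(d) − 1)·B(d) = ∑_{s+t=d} v(s)·v(t)·B(s)·B(t) holds (in ℤ). Then v(d)·(f(d) − 1)·B(d) = ∑_{s+t=d} v(s)·C(v(t), 2)·B(s)·B(t), where C(a, 2) = a(a−1)/2. -/

import Mathlib

-- A degree distribution is a finitely supported function `d : ℕ → ℕ` with `d 0 = 0`
-- (modeled as `d : ℕ →₀ ℕ` together with the hypothesis `d 0 = 0`).

/-- `f(d) = ∑_{i ≥ 1} d i`, the number of faces (as an integer). -/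
def fD (d : ℕ →₀ ℕ) : ℤ := d.sum fun _ k => (k : ℤ)

/-- `n(d) = ∑_{i ≥ 1} i · d i`, the number of edges (as an integer). -/
def nD (d : ℕ →₀ ℕ) : ℤ := d.sum fun i k => (i : ℤ) * (k : ℤ)

/-- `v(d) = n(d) + 2 - f(d)`, the number of vertices (Euler's formula). -/
def vD (d : ℕ →₀ ℕ) : ℤ := nD d + 2 - fD d

/-- `C(a, 2) = a(a-1)/2`, with `C(a, 2) = 0` for `a ≤ 1`. -/
def C2 (a : ℤ) : ℤ := if a ≤ 1 then 0 else a * (a - 1) / 2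

lemma fD_add (s t : ℕ →₀ ℕ) : fD (s + t) = fD s + fD t := by
  unfold fD
  rw [Finsupp.sum_add_index' (by simp) (by intro a b1 b2; push_cast; ring)]

lemma nD_add (s t : ℕ →₀ ℕ) : nD (s + t) = nD s + nD t := by
  unfold nD
  rw [Finsupp.sum_add_index' (by simp) (by intro a b1 b2; push_cast; ring)]

lemma vD_add (s t : ℕ →₀ ℕ) : vD (s + t) = vD s + vD t - 2 := by
  unfold vD; rw [nD_add, fD_add]; ring

lemma vD_two_le (d : ℕ →₀ ℕ) (hd : d 0 = 0) : 2 ≤ vD d := by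
  have h : 0 ≤ nD d - fD d := by
    rw [nD, fD, Finsupp.sum, Finsupp.sum, ← Finset.sum_sub_distrib]
    apply Finset.sum_nonneg
    intro i hi
    have hi0 : i ≠ 0 := by rintro rfl; exact (Finsupp.mem_support_iff.mp hi) hd
    have h1 : 1 ≤ (i : ℤ) := by exact_mod_cast Nat.one_le_iff_ne_zero.mpr hi0
    have h2 : (0 : ℤ) ≤ (d i : ℤ) := Int.ofNat_nonneg _
    nlinarith
  unfold vD; linarith

lemma two_mul_C2 {a : ℤ} (ha : 2 ≤ a) : 2 * C2 a = a * (a - 1) := by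
  unfold C2
  rw [if_neg (by omega)]
  obtain ⟨b, hb⟩ := Int.even_mul_succ_self (a - 1)
  have h2 : a * (a - 1) = 2 * b := by nlinarith
  rw [h2, Int.mul_ediv_cancel_left _ two_ne_zero]

lemma sum_swap_anti (d : ℕ →₀ ℕ) (g : (ℕ →₀ ℕ) → (ℕ →₀ ℕ) → ℤ) :
    ∑ p ∈ Finset.HasAntidiagonal.antidiagonal d, g p.1 p.2 = ∑ p ∈ Finset.HasAntidiagonal.antidiagonal d, g p.2 p.1 := by
  conv_lhs => rw [← Finset.HasAntidiagonal.map_swap_antidiagonal (n := d)]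
  rw [Finset.sum_map]
  rfl

theorem intermediate_identity_of_marked_vertex
    (B : (ℕ →₀ ℕ) → ℤ) (hB0 : B 0 = 0) (d : ℕ →₀ ℕ) (hd : d 0 = 0)
    (hvertex : 4 * (fD d - 1) * B d =
      ∑ p ∈ Finset.HasAntidiagonal.antidiagonal d, vD p.1 * vD p.2 * B p.1 * B p.2) :
    vD d * (fD d - 1) * B d =
      ∑ p ∈ Finset.HasAntidiagonal.antidiagonal d, vD p.1 * C2 (vD p.2) * B p.1 * B p.2 := by
  have key : ∀ p ∈ Finset.HasAntidiagonal.antidiagonal d,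
      2 ≤ vD p.1 ∧ 2 ≤ vD p.2 ∧ vD p.1 + vD p.2 = vD d + 2 := by
    intro p hp
    have hsum : p.1 + p.2 = d := Finset.HasAntidiagonal.mem_antidiagonal.mp hp
    have h0 : p.1 0 + p.2 0 = 0 := by
      have := congrArg (fun f => f 0) hsum
      simpa [hd] using this
    refine ⟨vD_two_le _ (by omega), vD_two_le _ (by omega), ?_⟩
    rw [← hsum, vD_add]; ring
  have h4 : 4 * (vD d * (fD d - 1) * B d) =
      4 * ∑ p ∈ Finset.HasAntidiagonal.antidiagonal d, vD p.1 * C2 (vD p.2) * B p.1 * B p.2 := by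
    calc 4 * (vD d * (fD d - 1) * B d)
        = vD d * (4 * (fD d - 1) * B d) := by ring
      _ = vD d * ∑ p ∈ Finset.HasAntidiagonal.antidiagonal d, vD p.1 * vD p.2 * B p.1 * B p.2 := by
          rw [hvertex]
      _ = ∑ p ∈ Finset.HasAntidiagonal.antidiagonal d,
            vD d * (vD p.1 * vD p.2 * B p.1 * B p.2) := Finset.mul_sum _ _ _
      _ = ∑ p ∈ Finset.HasAntidiagonal.antidiagonal d,
            (vD p.1 * (vD p.2 * (vD p.2 - 1)) * B p.1 * B p.2
              + vD p.2 * (vD p.1 * (vD p.1 - 1)) * B p.1 * B p.2) := by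
          apply Finset.sum_congr rfl
          intro p hp
          obtain ⟨_, _, hv⟩ := key p hp
          have : vD d = vD p.1 + vD p.2 - 2 := by linarith
          rw [this]; ring
      _ = ∑ p ∈ Finset.HasAntidiagonal.antidiagonal d,
            vD p.1 * (vD p.2 * (vD p.2 - 1)) * B p.1 * B p.2
          + ∑ p ∈ Finset.HasAntidiagonal.antidiagonal d,
            vD p.2 * (vD p.1 * (vD p.1 - 1)) * B p.1 * B p.2 := Finset.sum_add_distrib
      _ = 2 * ∑ p ∈ Finset.HasAntidiagonal.antidiagonal d,
            vD p.1 * (vD p.2 * (vD p.2 - 1)) * B p.1 * B p.2 := by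
          rw [sum_swap_anti d (fun s t => vD t * (vD s * (vD s - 1)) * B s * B t)]
          rw [two_mul]
          congr 1
          apply Finset.sum_congr rfl
          intro p _
          ring
      _ = 2 * ∑ p ∈ Finset.HasAntidiagonal.antidiagonal d,
            vD p.1 * (2 * C2 (vD p.2)) * B p.1 * B p.2 := by
          congr 1
          apply Finset.sum_congr rfl
          intro p hp
          obtain ⟨_, h2, _⟩ := key p hp
          rw [two_mul_C2 h2]
      _ = 4 * ∑ p ∈ Finset.HasAntidiagonal.antidiagonal d, vD p.1 * C2 (vD p.2) * B p.1 * B p.2 := by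
          rw [Finset.mul_sum, Finset.mul_sum]
          apply Finset.sum_congr rfl
          intro p _
          ring
  exact mul_left_cancel₀ (by norm_num : (4:ℤ) ≠ 0) h4
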